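/- Let $1<p<2$, $\kappa\in(0,1)$. There exists $C_1=C_1(p,\kappa)>0$ such that for all $x,y\in\mathbb{R}^N$ with $x\ne0$: $|x+y|^p\ge |x|^p+p|x|^{p-2}x\cdot y+\tfrac{1-\kappa}{2}\big(p|x|^{p-2}|y|^2+p(p-2)|\tilde\omega|^{p-2}(|x|-|x+y|)^2\big)+C_1\min\{|y|^p,|x|^{p-2}|y|^2\}$, where $\tilde\omega=\tilde\omega(x,x+y)$ equals $\big(\frac{|x+y|}{(2-p)|x+y|+(p-1)|x|}\big)^{1/(p-2)}x$ if $|x|<|x+y|$ and $x$ otherwise. -/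

import Mathlib

open Real
open scoped RealInnerProductSpace

/-!
Dividing by `‖x‖ ^ p` and writing `⟪x, y⟫ = (‖x + y‖² - ‖x‖² - ‖y‖²) / 2` reduces the inequality
to a scalar one in `τ = ‖x + y‖ / ‖x‖` and `υ = ‖y‖ / ‖x‖ ≥ |τ - 1|`. It follows from the
second-order Taylor lower bounds of `τ ^ p` at `1`, with remainder `p (p - 1) / 2 · (τ - 1)²` for
`τ ≤ 1` and `p (p - 1) / 2 · τ ^ (p - 2) (τ - 1)²` for `τ ≥ 1` (as `r ^ (p - 2)` decreases). For
`τ > 1`, Bernoulli's inequality `τ ^ (2 - p) ≤ (2 - p) τ + (p - 1)` bounds the `ω̃`-term, and the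
`κ`-share of the quadratic terms absorbs `C₁ min (υ ^ p) (υ ^ 2)` with `C₁ = κ p (p - 1) / 4`.
-/

lemma mul_rpow_sub_one_mul_sub_one_le_rpow_sub_one {q r : ℝ} (hq0 : 0 ≤ q) (hq1 : q ≤ 1)
    (hr : 0 < r) : q * r ^ (q - 1) * (r - 1) ≤ r ^ q - 1 := by
  have h := rpow_one_add_le_one_add_mul_self (s := r⁻¹ - 1) (by simp [hr.le]) hq0 hq1
  rw [add_sub_cancel, inv_rpow hr.le] at h
  have hrq : 0 < r ^ q := rpow_pos_of_pos hr q
  have e : r ^ (q - 1) = r ^ q * r⁻¹ := by rw [rpow_sub_one hr.ne', div_eq_mul_inv]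
  rw [e]
  have := mul_le_mul_of_nonneg_left h hrq.le
  rw [mul_inv_cancel₀ hrq.ne'] at this
  have hexp : q * (r ^ q * r⁻¹) * (r - 1) = q * r ^ q - q * (r ^ q * r⁻¹) := by
    field_simp
  linarith

lemma hasDerivAt_rpow_sub_quadratic (p c : ℝ) {r : ℝ} (hr : 0 < r) :
    HasDerivAt (fun r : ℝ => r ^ p - p * r - p * (p - 1) / 2 * c * (r - 1) ^ 2)
      (p * (r ^ (p - 1) - 1 - (p - 1) * c * (r - 1))) r := by
  have h := (((hasDerivAt_rpow_const (p := p) (Or.inl hr.ne')).sub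
    ((hasDerivAt_id r).const_mul p)).sub
    ((((hasDerivAt_id r).sub_const 1).pow 2).const_mul (p * (p - 1) / 2 * c)))
  refine h.congr_deriv ?_
  simp only [id, Nat.cast_ofNat]
  ring

lemma taylor_two_le_rpow_of_le_one {p τ : ℝ} (hp1 : 1 ≤ p) (hp2 : p ≤ 2) (hτ0 : 0 ≤ τ)
    (hτ1 : τ ≤ 1) : 1 + p * (τ - 1) + p * (p - 1) / 2 * (τ - 1) ^ 2 ≤ τ ^ p := by
  have hanti : AntitoneOn (fun r : ℝ => r ^ p - p * r - p * (p - 1) / 2 * 1 * (r - 1) ^ 2)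
      (Set.Icc τ 1) := by
    refine antitoneOn_of_hasDerivWithinAt_nonpos (convex_Icc τ 1)
      (f' := fun r => p * (r ^ (p - 1) - 1 - (p - 1) * 1 * (r - 1))) ?_
      (fun r hr => ?_) (fun r hr => ?_)
    · refine ContinuousOn.sub (ContinuousOn.sub ?_ (by fun_prop)) (by fun_prop)
      exact (continuousOn_id.rpow_const fun _ _ => Or.inr (by linarith))
    · rw [interior_Icc] at hr
      exact (hasDerivAt_rpow_sub_quadratic p 1 (hτ0.trans_lt hr.1)).hasDerivWithinAt
    · rw [interior_Icc] at hr
      have h := rpow_one_add_le_one_add_mul_self (s := r - 1) (by linarith [hr.1])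
        (sub_nonneg.2 hp1) (by linarith)
      rw [add_sub_cancel] at h
      nlinarith
  have h := hanti ⟨le_rfl, hτ1⟩ ⟨hτ1, le_rfl⟩ hτ1
  simp only [one_rpow] at h
  linarith

lemma taylor_two_le_rpow_of_one_le {p τ : ℝ} (hp1 : 1 ≤ p) (hp2 : p ≤ 2) (hτ : 1 ≤ τ) :
    1 + p * (τ - 1) + p * (p - 1) / 2 * τ ^ (p - 2) * (τ - 1) ^ 2 ≤ τ ^ p := by
  have hmono : MonotoneOn
      (fun r : ℝ => r ^ p - p * r - p * (p - 1) / 2 * τ ^ (p - 2) * (r - 1) ^ 2)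
      (Set.Icc 1 τ) := by
    refine monotoneOn_of_hasDerivWithinAt_nonneg (convex_Icc 1 τ)
      (f' := fun r => p * (r ^ (p - 1) - 1 - (p - 1) * τ ^ (p - 2) * (r - 1))) ?_
      (fun r hr => ?_) (fun r hr => ?_)
    · refine ContinuousOn.sub (ContinuousOn.sub ?_ (by fun_prop)) (by fun_prop)
      exact (continuousOn_id.rpow_const fun _ _ => Or.inr (by linarith))
    · rw [interior_Icc] at hr
      exact (hasDerivAt_rpow_sub_quadratic p _ (one_pos.trans hr.1)).hasDerivWithinAt
    · rw [interior_Icc] at hr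
      have hr0 : 0 < r := one_pos.trans hr.1
      have h := mul_rpow_sub_one_mul_sub_one_le_rpow_sub_one (q := p - 1) (by linarith)
        (by linarith) hr0
      have hτr : τ ^ (p - 2) ≤ r ^ (p - 1 - 1) :=
        rpow_le_rpow_of_nonpos hr0 hr.2.le (by linarith) |>.trans_eq (by ring_nf)
      have := mul_le_mul_of_nonneg_right (mul_le_mul_of_nonneg_left hτr (by linarith : 0 ≤ p - 1))
        (by linarith [hr.1] : 0 ≤ r - 1)
      nlinarith
  have h := hmono ⟨le_rfl, hτ⟩ ⟨hτ, le_rfl⟩ hτ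
  simp only [one_rpow] at h
  linarith

/-- `‖ω̃(x, x + y)‖ ^ (p - 2) = expansionWeight p (‖x + y‖ / ‖x‖) * ‖x‖ ^ (p - 2)`. -/
noncomputable def expansionWeight (p τ : ℝ) : ℝ := if 1 < τ then τ / ((2 - p) * τ + (p - 1)) else 1

lemma min_rpow_sq_le_two_mul_one_add_rpow_mul_sq {p υ : ℝ} (hp1 : 1 ≤ p) (hp2 : p ≤ 2)
    (hυ : 0 ≤ υ) : min (υ ^ p) (υ ^ 2) ≤ 2 * (1 + υ) ^ (p - 2) * υ ^ 2 := by
  have h2 : 1 ≤ 2 * (2 : ℝ) ^ (p - 2) := by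
    have := rpow_le_rpow_of_exponent_le (by norm_num : (1 : ℝ) ≤ 2) (by linarith : -1 ≤ p - 2)
    rw [rpow_neg_one] at this
    linarith
  rcases le_total υ 1 with hυ1 | hυ1
  · have h := rpow_le_rpow_of_nonpos (by linarith : (0 : ℝ) < 1 + υ) (by linarith : 1 + υ ≤ 2)
      (by linarith : p - 2 ≤ 0)
    calc min (υ ^ p) (υ ^ 2) ≤ 1 * υ ^ 2 := (min_le_right _ _).trans_eq (one_mul _).symm
      _ ≤ 2 * (1 + υ) ^ (p - 2) * υ ^ 2 := by gcongr; linarith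
  · have hυ0 : 0 < υ := by linarith
    have h := rpow_le_rpow_of_nonpos (by linarith : (0 : ℝ) < 1 + υ) (by linarith : 1 + υ ≤ 2 * υ)
      (by linarith : p - 2 ≤ 0)
    rw [mul_rpow zero_le_two hυ0.le] at h
    have e : υ ^ p = υ ^ (p - 2) * υ ^ 2 := by
      rw [← rpow_natCast, ← rpow_add hυ0]; norm_num
    calc min (υ ^ p) (υ ^ 2) ≤ (2 * 2 ^ (p - 2)) * υ ^ (p - 2) * υ ^ 2 := by
          rw [e]; refine (min_le_left _ _).trans ?_; gcongr; nlinarith [rpow_pos_of_pos hυ0 (p - 2)]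
      _ ≤ 2 * (1 + υ) ^ (p - 2) * υ ^ 2 := by rw [mul_assoc 2]; gcongr

lemma scalar_expansion_le_rpow {p κ τ υ : ℝ} (hp1 : 1 ≤ p) (hp2 : p ≤ 2) (hκ0 : 0 ≤ κ)
    (hκ1 : κ ≤ 1) (hτ : 0 ≤ τ) (hυ : |τ - 1| ≤ υ) :
    1 + p * ((τ ^ 2 - 1 - υ ^ 2) / 2)
      + (1 - κ) / 2 * (p * υ ^ 2 + p * (p - 2) * expansionWeight p τ * (1 - τ) ^ 2)
      + κ * p * (p - 1) / 4 * min (υ ^ p) (υ ^ 2) ≤ τ ^ p := by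
  have hsq : (τ - 1) ^ 2 ≤ υ ^ 2 := sq_le_sq' (abs_le.1 hυ).1 (abs_le.1 hυ).2
  have hκp : 0 ≤ κ * p := by positivity
  have hC : 0 ≤ κ * p * (p - 1) := mul_nonneg hκp (by linarith)
  rcases le_or_gt τ 1 with hτ1 | hτ1
  · rw [expansionWeight, if_neg (not_lt.2 hτ1)]
    have hT := taylor_two_le_rpow_of_le_one hp1 hp2 hτ hτ1
    have hmin := mul_le_mul_of_nonneg_left (min_le_right (υ ^ p) (υ ^ 2)) hC
    have := mul_le_mul_of_nonneg_left hsq (mul_nonneg hκp (by linarith : 0 ≤ 2 - p))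
    nlinarith [mul_nonneg hC (sq_nonneg υ)]
  · rw [expansionWeight, if_pos hτ1]
    have hτ0 : 0 < τ := one_pos.trans hτ1
    set E := (2 - p) * τ + (p - 1)
    have hE0 : 0 < E := by nlinarith
    have hτE : τ ^ (2 - p) ≤ E := by
      have h := rpow_one_add_le_one_add_mul_self (s := τ - 1) (by linarith)
        (by linarith : 0 ≤ 2 - p) (by linarith)
      rw [add_sub_cancel] at h
      linarith
    have hinvE : 1 / E ≤ τ ^ (p - 2) := by
      rw [one_div_le hE0 (rpow_pos_of_pos hτ0 _), one_div, ← rpow_neg hτ0.le, neg_sub]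
      exact hτE
    have hW : p * (p - 2) * (τ / E) ≤ p * (p - 1) * τ ^ (p - 2) - p := by
      have e : p * (p - 2) * (τ / E) = p * (p - 1) * (1 / E) - p := by
        field_simp
        ring
      rw [e]
      gcongr
    have hq1 : (p - 1) * τ ^ (p - 2) ≤ 1 := by
      have : τ ^ (p - 2) ≤ 1 := rpow_le_one_of_one_le_of_nonpos hτ1.le (by linarith)
      nlinarith [rpow_pos_of_pos hτ0 (p - 2)]
    have hmin : min (υ ^ p) (υ ^ 2) ≤ 2 * τ ^ (p - 2) * υ ^ 2 := by
      refine (min_rpow_sq_le_two_mul_one_add_rpow_mul_sq hp1 hp2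
        (by linarith [abs_le.1 hυ])).trans ?_
      gcongr 2 * ?_ * _
      exact rpow_le_rpow_of_nonpos hτ0 (by linarith [abs_le.1 hυ]) (by linarith)
    have hT := taylor_two_le_rpow_of_one_le hp1 hp2 hτ1.le
    have h1 := mul_le_mul_of_nonneg_right hW
      (by positivity : 0 ≤ (1 - κ) / 2 * (1 - τ) ^ 2)
    have h2 := mul_le_mul_of_nonneg_left hmin hC
    have h3 := mul_le_mul_of_nonneg_right hq1
      (mul_nonneg hκp (by linarith : 0 ≤ υ ^ 2 - (τ - 1) ^ 2))
    linarith

lemma expansion_le_rpow {p κ s t u : ℝ} (hp1 : 1 ≤ p) (hp2 : p ≤ 2) (hκ0 : 0 ≤ κ)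
    (hκ1 : κ ≤ 1) (hs : 0 < s) (ht : 0 ≤ t) (hu : |t - s| ≤ u) :
    s ^ p + p * s ^ (p - 2) * ((t ^ 2 - s ^ 2 - u ^ 2) / 2)
      + (1 - κ) / 2 * (p * s ^ (p - 2) * u ^ 2
        + p * (p - 2) * (expansionWeight p (t / s) * s ^ (p - 2)) * (s - t) ^ 2)
      + κ * p * (p - 1) / 4 * min (u ^ p) (s ^ (p - 2) * u ^ 2) ≤ t ^ p := by
  have hu0 : 0 ≤ u := (abs_nonneg _).trans hu
  have hυ : |t / s - 1| ≤ u / s := by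
    rw [div_sub_one hs.ne', abs_div, abs_of_pos hs]
    gcongr
  have H := mul_le_mul_of_nonneg_left
    (scalar_expansion_le_rpow hp1 hp2 hκ0 hκ1 (div_nonneg ht hs.le) hυ) (rpow_nonneg hs.le p)
  have hsp : s ^ p ≠ 0 := (rpow_pos_of_pos hs p).ne'
  have e : s ^ (p - 2) = s ^ p / s ^ 2 := by
    rw [← rpow_natCast, ← rpow_sub hs]; norm_num
  have hmin : s ^ p * min ((u / s) ^ p) ((u / s) ^ 2) = min (u ^ p) (s ^ (p - 2) * u ^ 2) := by
    rw [mul_min_of_nonneg _ _ (rpow_nonneg hs.le p), div_rpow hu0 hs.le, mul_div_cancel₀ _ hsp, e]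
    congr 1
    field_simp
  rw [div_rpow ht hs.le, mul_div_cancel₀ _ hsp, mul_add, mul_left_comm (s ^ p), hmin] at H
  refine le_of_eq_of_le ?_ H
  rw [e]
  field_simp

lemma norm_rpow_one_div_smul_rpow {E : Type*} [NormedAddCommGroup E] [NormedSpace ℝ E]
    {c q : ℝ} (hc : 0 ≤ c) (hq : q ≠ 0) (x : E) : ‖c ^ (1 / q) • x‖ ^ q = c * ‖x‖ ^ q := by
  rw [norm_smul, norm_of_nonneg (rpow_nonneg hc _), mul_rpow (rpow_nonneg hc _) (norm_nonneg x),
    ← rpow_mul hc, one_div_mul_cancel hq, rpow_one]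

theorem vector_expansion_p_lt_two_general (N : ℕ) (p κ : ℝ)
    (hp1 : 1 < p) (hp2 : p < 2) (hκ0 : 0 < κ) (hκ1 : κ < 1) :
    ∃ C₁ : ℝ, 0 < C₁ ∧ ∀ x y : EuclideanSpace ℝ (Fin N), x ≠ 0 →
      let w : EuclideanSpace ℝ (Fin N) :=
        if ‖x‖ < ‖x + y‖ then
          ((‖x + y‖ / ((2 - p) * ‖x + y‖ + (p - 1) * ‖x‖)) ^ ((1 : ℝ) / (p - 2))) • x
        else x
      ‖x + y‖ ^ p ≥ ‖x‖ ^ p + p * ‖x‖ ^ (p - 2) * ⟪x, y⟫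
        + (1 - κ) / 2 * (p * ‖x‖ ^ (p - 2) * ‖y‖ ^ 2
            + p * (p - 2) * ‖w‖ ^ (p - 2) * (‖x‖ - ‖x + y‖) ^ 2)
        + C₁ * min (‖y‖ ^ p) (‖x‖ ^ (p - 2) * ‖y‖ ^ 2) := by
  refine ⟨κ * p * (p - 1) / 4, by have := sub_pos.2 hp1; positivity, ?_⟩
  intro x y hx w
  have hs : 0 < ‖x‖ := norm_pos_iff.2 hx
  have hw : ‖w‖ ^ (p - 2) = expansionWeight p (‖x + y‖ / ‖x‖) * ‖x‖ ^ (p - 2) := by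
    simp only [w, expansionWeight, one_lt_div hs]
    split_ifs
    · rw [norm_rpow_one_div_smul_rpow (by positivity) (by linarith)]
      field_simp
    · rw [one_mul]
  have hu : |‖x + y‖ - ‖x‖| ≤ ‖y‖ := by
    simpa using abs_norm_sub_norm_le (x + y) x
  rw [ge_iff_le, hw, real_inner_eq_norm_add_mul_self_sub_norm_mul_self_sub_norm_mul_self_div_two,
    ← sq, ← sq, ← sq]
  exact expansion_le_rpow hp1.le hp2.le hκ0.le hκ1.le hs (norm_nonneg _) hu

theorem vector_expansion_p_lt_two (N : ℕ) (hN : 1 ≤ N) (p κ : ℝ)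
    (hp1 : 1 < p) (hp2 : p < 2) (hκ0 : 0 < κ) (hκ1 : κ < 1) :
    ∃ C₁ : ℝ, 0 < C₁ ∧ ∀ x y : EuclideanSpace ℝ (Fin N), x ≠ 0 →
      let w : EuclideanSpace ℝ (Fin N) :=
        if ‖x‖ < ‖x + y‖ then
          ((‖x + y‖ / ((2 - p) * ‖x + y‖ + (p - 1) * ‖x‖)) ^ ((1 : ℝ) / (p - 2))) • x
        else x
      ‖x + y‖ ^ p ≥ ‖x‖ ^ p + p * ‖x‖ ^ (p - 2) * ⟪x, y⟫
        + (1 - κ) / 2 * (p * ‖x‖ ^ (p - 2) * ‖y‖ ^ 2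
            + p * (p - 2) * ‖w‖ ^ (p - 2) * (‖x‖ - ‖x + y‖) ^ 2)
        + C₁ * min (‖y‖ ^ p) (‖x‖ ^ (p - 2) * ‖y‖ ^ 2) :=
  vector_expansion_p_lt_two_general N p κ hp1 hp2 hκ0 hκ1
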